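/- Let α ∈ (0,1), λ > 0, and let v : [0,∞) → ℝ be Lipschitz with v(s) = 0 for all s ≥ 1. Define u : ℝ² → ℝ by u(z) = v(|z|), and for 0 < r < 1 set x₀ = (r, 0). Define F_λ(s,r) = ∫_0^π e^{−λ√(s² + r² − 2sr cos θ)} (s² + r² − 2sr cos θ)^{−(α+2)/2} dθ for s ≥ 0, s ≠ r. Then the function y ↦ (u(x₀+y) − u(x₀)) e^{−λ|y|} |y|^{−(α+2)} is Lebesgue integrable on ℝ² \ {0} and ∫_{ℝ²\{0}} (u(x₀+y) − u(x₀)) e^{−λ|y|} |y|^{−(α+2)} dy = 2 ∫_0^∞ s·(v(s) − v(r))·F_λ(s,r) ds. -/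

import Mathlib

open MeasureTheory Set

/-!
Transport the integral to `ℂ` by a linear isometry and translate by `x₀ = r`: the integrand
becomes `(v ‖z‖ - v r) e^{-λ‖z - r‖} ‖z - r‖^{-(α+2)}`. In polar coordinates `z = s e^{iθ}`
one has `‖z - r‖ = √(s² + r² - 2sr cos θ)`, which is even in `θ`, so the angular integral over
`(-π, π)` is twice the one over `(0, π)`.
Fubini applies because the radial Lipschitz bound `|v ‖x + y‖ - v ‖x‖| ≤ K min ‖y‖ 2` dominates
the integrand by a radial function whose planar profile
`s · min s 2 · e^{-λs} s^{-(α+2)} ≤ s^{-α} e^{-λs}` is integrable on `(0, ∞)` as `α < 1`.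
-/

noncomputable def temperedKernel (α lam t : ℝ) : ℝ := Real.exp (-lam * t) * t ^ (-(α + 2))

theorem temperedKernel_nonneg (α lam : ℝ) {t : ℝ} (ht : 0 ≤ t) : 0 ≤ temperedKernel α lam t := by
  unfold temperedKernel
  positivity

theorem temperedKernel_sqrt (α lam : ℝ) {q : ℝ} (hq : 0 ≤ q) :
    temperedKernel α lam √q = Real.exp (-lam * √q) * q ^ (-(α + 2) / 2) := by
  rw [temperedKernel, Real.sqrt_eq_rpow, ← Real.rpow_mul hq]
  ring_nf

theorem abs_le_of_lipschitzOnWith_of_eq_zero {v : ℝ → ℝ} {K : NNReal}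
    (hv : LipschitzOnWith K v (Ici 0)) (hv1 : ∀ s : ℝ, 1 ≤ s → v s = 0) {a : ℝ} (ha : 0 ≤ a) :
    |v a| ≤ K := by
  rcases le_or_gt 1 a with h | h
  · simp [hv1 a h]
  · calc |v a| = dist (v a) (v 1) := by rw [hv1 1 le_rfl, Real.dist_eq, sub_zero]
      _ ≤ K * dist a 1 := hv.dist_le_mul a ha 1 (mem_Ici.2 zero_le_one)
      _ ≤ K * 1 := by
          gcongr
          rw [Real.dist_eq, abs_of_neg (by linarith)]
          linarith
      _ = K := mul_one _

theorem abs_sub_norm_add_le {E : Type*} [SeminormedAddCommGroup E] {v : ℝ → ℝ} {K : NNReal}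
    (hv : LipschitzOnWith K v (Ici 0)) (hv1 : ∀ s : ℝ, 1 ≤ s → v s = 0) (x y : E) :
    |v ‖x + y‖ - v ‖x‖| ≤ K * min ‖y‖ 2 := by
  rw [mul_min_of_nonneg _ _ K.coe_nonneg]
  refine le_min ?_ ?_
  · calc |v ‖x + y‖ - v ‖x‖| = dist (v ‖x + y‖) (v ‖x‖) := rfl
      _ ≤ K * dist ‖x + y‖ ‖x‖ := hv.dist_le_mul _ (norm_nonneg _) _ (norm_nonneg _)
      _ ≤ K * ‖y‖ := by
          gcongr
          simpa [Real.dist_eq] using abs_norm_sub_norm_le (x + y) x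
  · calc |v ‖x + y‖ - v ‖x‖| ≤ |v ‖x + y‖| + |v ‖x‖| := abs_sub _ _
      _ ≤ K + K := add_le_add (abs_le_of_lipschitzOnWith_of_eq_zero hv hv1 (norm_nonneg _))
          (abs_le_of_lipschitzOnWith_of_eq_zero hv hv1 (norm_nonneg _))
      _ = K * 2 := by ring

theorem integrableOn_mul_min_mul_temperedKernel {α lam : ℝ} (hα : α < 1) (hlam : 0 < lam) :
    IntegrableOn (fun t => t * (min t 2 * temperedKernel α lam t)) (Ioi 0) := by
  have hdom : IntegrableOn (fun t : ℝ => t ^ (-α) * Real.exp (-lam * t ^ (1 : ℝ))) (Ioi 0) :=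
    integrableOn_rpow_mul_exp_neg_mul_rpow (by linarith) one_pos hlam
  refine hdom.mono' ?_ ?_
  · refine ContinuousOn.aestronglyMeasurable (fun t ht => ?_) measurableSet_Ioi
    unfold temperedKernel
    have hrpow := Real.continuousAt_rpow_const t (-(α + 2)) (Or.inl ht.ne')
    fun_prop (disch := exact ht.ne')
  · filter_upwards [ae_restrict_mem measurableSet_Ioi] with t (ht : 0 < t)
    have hsplit : t ^ (-α) = t * t * t ^ (-(α + 2)) := by
      rw [show -α = 1 + 1 + -(α + 2) by ring, Real.rpow_add ht, Real.rpow_add ht, Real.rpow_one]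
    have hk := temperedKernel_nonneg α lam ht.le
    rw [Real.norm_of_nonneg (by positivity), Real.rpow_one, hsplit]
    calc t * (min t 2 * temperedKernel α lam t) ≤ t * (t * temperedKernel α lam t) := by
          gcongr
          exact min_le_left t 2
      _ = t * t * t ^ (-(α + 2)) * Real.exp (-lam * t) := by rw [temperedKernel]; ring

theorem integrable_min_norm_mul_temperedKernel {E : Type*} [NormedAddCommGroup E]
    [InnerProductSpace ℝ E] [FiniteDimensional ℝ E] [MeasurableSpace E] [BorelSpace E]
    (μ : Measure E) [μ.IsAddHaarMeasure] (hE : Module.finrank ℝ E = 2) {α lam : ℝ} (hα : α < 1)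
    (hlam : 0 < lam) :
    Integrable (fun y : E => min ‖y‖ 2 * temperedKernel α lam ‖y‖) μ := by
  have : Nontrivial E := Module.nontrivial_of_finrank_eq_succ hE
  rw [integrable_fun_norm_addHaar μ (f := fun t => min t 2 * temperedKernel α lam t), hE]
  simpa using integrableOn_mul_min_mul_temperedKernel hα hlam

theorem integrable_radial_sub_mul_temperedKernel {E : Type*} [NormedAddCommGroup E]
    [InnerProductSpace ℝ E] [FiniteDimensional ℝ E] [MeasurableSpace E] [BorelSpace E]
    (μ : Measure E) [μ.IsAddHaarMeasure] (hE : Module.finrank ℝ E = 2) {α lam : ℝ} (hα : α < 1)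
    (hlam : 0 < lam) {v : ℝ → ℝ} {K : NNReal} (hv : LipschitzOnWith K v (Ici 0))
    (hv1 : ∀ s : ℝ, 1 ≤ s → v s = 0) (x : E) :
    Integrable (fun y => (v ‖x + y‖ - v ‖x‖) * temperedKernel α lam ‖y‖) μ := by
  have hvc : Continuous fun z : E => v ‖z‖ :=
    hv.continuousOn.comp_continuous continuous_norm fun z => norm_nonneg z
  have hk : Measurable (temperedKernel α lam) := by unfold temperedKernel; fun_prop
  refine ((integrable_min_norm_mul_temperedKernel μ hE hα hlam).const_mul K).mono' ?_
    (ae_of_all _ fun y => ?_)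
  · exact ((hvc.comp (continuous_const.add continuous_id)).sub
      continuous_const).aestronglyMeasurable.mul (hk.comp measurable_norm).aestronglyMeasurable
  · rw [norm_mul, Real.norm_eq_abs,
      Real.norm_of_nonneg (temperedKernel_nonneg α lam (norm_nonneg y)), ← mul_assoc]
    exact mul_le_mul_of_nonneg_right (abs_sub_norm_add_le hv hv1 x y)
      (temperedKernel_nonneg α lam (norm_nonneg y))

theorem integrableOn_polarCoord_target_iff {E : Type*} [NormedAddCommGroup E] [NormedSpace ℝ E]
    (f : ℝ × ℝ → E) :
    IntegrableOn (fun p => p.1 • f (polarCoord.symm p)) polarCoord.target ↔ Integrable f := by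
  rw [← integrableOn_univ, ← integrableOn_congr_set_ae polarCoord_source_ae_eq_univ,
    ← polarCoord.symm_image_target_eq_source,
    integrableOn_image_iff_integrableOn_abs_det_fderiv_smul volume
      polarCoord.open_target.measurableSet
      (fun p _ => (hasFDerivAt_polarCoord_symm p).hasFDerivWithinAt) polarCoord.symm.injOn]
  refine integrableOn_congr_fun (fun p hp => ?_) polarCoord.open_target.measurableSet
  rw [det_fderivPolarCoordSymm, abs_of_pos hp.1]

theorem Complex.integral_eq_integral_Ioi_integral_Ioo {E : Type*} [NormedAddCommGroup E]
    [NormedSpace ℝ E] {f : ℂ → E} (hf : Integrable f) :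
    ∫ z, f z = ∫ s in Ioi 0, s • ∫ θ in Ioo (-Real.pi) Real.pi,
      f (Complex.polarCoord.symm (s, θ)) := by
  have hpolar : IntegrableOn (fun p => p.1 • f (Complex.polarCoord.symm p)) polarCoord.target :=
    (integrableOn_polarCoord_target_iff _).2
      ((Complex.volume_preserving_equiv_real_prod.symm).integrable_comp_emb
        Complex.measurableEquivRealProd.symm.measurableEmbedding |>.2 hf)
  rw [← Complex.integral_comp_polarCoord_symm, polarCoord_target, Measure.volume_eq_prod,
    setIntegral_prod _ hpolar]
  simp_rw [integral_smul]

theorem Complex.norm_polarCoord_symm_sub_ofReal (s θ r : ℝ) :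
    ‖Complex.polarCoord.symm (s, θ) - r‖ = √(s ^ 2 + r ^ 2 - 2 * s * r * Real.cos θ) := by
  rw [Complex.norm_def, Complex.normSq_apply]
  congr 1
  simp only [Complex.polarCoord_symm_apply, Complex.sub_re, Complex.sub_im, Complex.mul_re,
    Complex.mul_im, Complex.add_re, Complex.add_im, Complex.ofReal_re, Complex.ofReal_im,
    Complex.I_re, Complex.I_im]
  linear_combination s ^ 2 * Real.sin_sq_add_cos_sq θ

theorem integral_Ioo_neg_self_of_even {E : Type*} [NormedAddCommGroup E] [NormedSpace ℝ E]
    {f : ℝ → E} (hf : ∀ x, f (-x) = f x) {a : ℝ} (ha : 0 < a) :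
    ∫ x in Ioo (-a) a, f x = (2 : ℝ) • ∫ x in Ioo 0 a, f x := by
  have hneg := Measure.measurePreserving_neg (volume : Measure ℝ)
  have hpre : Neg.neg ⁻¹' Ioo (-a) 0 = Ioo 0 a := by
    rw [Set.neg_preimage, Set.neg_Ioo, neg_zero, neg_neg]
  have hreflect : ∫ x in Ioo (-a) 0, f x = ∫ x in Ioo 0 a, f x := by
    rw [← hneg.setIntegral_preimage_emb measurableEmbedding_neg f, hpre]
    simp only [hf]
  by_cases hint : IntegrableOn f (Ioo 0 a)
  · have hint' : IntegrableOn f (Ioc (-a) 0) := by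
      rw [integrableOn_Ioc_iff_integrableOn_Ioo, ← hneg.integrableOn_comp_preimage
        measurableEmbedding_neg, hpre]
      exact hint.congr_fun (fun x _ => (hf x).symm) measurableSet_Ioo
    rw [← Ioc_union_Ioo_eq_Ioo (by linarith) ha,
      setIntegral_union (Ioc_disjoint_Ioi_same.mono_right Ioo_subset_Ioi_self) measurableSet_Ioo
        hint' hint,
      integral_Ioc_eq_integral_Ioo, hreflect, two_smul]
  · have hint' : ¬ IntegrableOn f (Ioo (-a) a) :=
      fun h => hint (h.mono_set (Ioo_subset_Ioo (by linarith) le_rfl))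
    rw [integral_undef hint, integral_undef hint', smul_zero]

theorem integral_temperedKernel_norm_polarCoord_symm_sub (α lam s r : ℝ) :
    ∫ θ in Ioo (-Real.pi) Real.pi, temperedKernel α lam ‖Complex.polarCoord.symm (s, θ) - r‖ =
      2 * ∫ θ in Ioo 0 Real.pi,
        Real.exp (-lam * √(s ^ 2 + r ^ 2 - 2 * s * r * Real.cos θ)) *
          (s ^ 2 + r ^ 2 - 2 * s * r * Real.cos θ) ^ (-(α + 2) / 2) := by
  have hq : ∀ θ, 0 ≤ s ^ 2 + r ^ 2 - 2 * s * r * Real.cos θ := fun θ => by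
    nlinarith [sq_nonneg (s - r * Real.cos θ), sq_nonneg (r * Real.sin θ), Real.sin_sq_add_cos_sq θ]
  simp only [Complex.norm_polarCoord_symm_sub_ofReal]
  rw [integral_Ioo_neg_self_of_even (fun θ => by rw [Real.cos_neg]) Real.pi_pos, smul_eq_mul]
  simp only [temperedKernel_sqrt α lam (hq _)]

/-- Two-dimensional isotropic case: for `α ∈ (0,1)`, `λ > 0`, a Lipschitz radial profile
`v : [0,∞) → ℝ` vanishing on `[1,∞)`, `u(z) = v(|z|)` and `x₀ = (r,0)` with `0 < r < 1`,
the integrand `y ↦ (u(x₀+y) − u(x₀)) e^{-λ|y|} |y|^{-(α+2)}` is integrable on `ℝ² \ {0}`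
and its integral reduces in polar coordinates to
`2 ∫₀^∞ s (v(s) − v(r)) F_λ(s,r) ds` with the angular kernel
`F_λ(s,r) = ∫₀^π e^{-λ√(s²+r²−2sr cos θ)} (s²+r²−2sr cos θ)^{-(α+2)/2} dθ`. -/
theorem tempered_levy_isotropic_polar_reduction
    (α lam r : ℝ) (hα : α ∈ Ioo (0:ℝ) 1) (hlam : 0 < lam) (hr : r ∈ Ioo (0:ℝ) 1)
    (v : ℝ → ℝ) (K : NNReal) (hv : LipschitzOnWith K v (Ici 0))
    (hv1 : ∀ s : ℝ, 1 ≤ s → v s = 0)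
    (u : EuclideanSpace ℝ (Fin 2) → ℝ) (hu : ∀ z, u z = v ‖z‖)
    (x₀ : EuclideanSpace ℝ (Fin 2)) (hx₀ : ∀ i, x₀ i = if i = 0 then r else 0) :
    IntegrableOn
      (fun y : EuclideanSpace ℝ (Fin 2) =>
        (u (x₀ + y) - u x₀) * Real.exp (-lam * ‖y‖) * ‖y‖ ^ (-(α + 2)))
      ({0}ᶜ : Set (EuclideanSpace ℝ (Fin 2)))
    ∧ (∫ y in ({0}ᶜ : Set (EuclideanSpace ℝ (Fin 2))),
          (u (x₀ + y) - u x₀) * Real.exp (-lam * ‖y‖) * ‖y‖ ^ (-(α + 2)))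
      = 2 * ∫ s in Ioi (0:ℝ),
          s * (v s - v r) *
            ∫ θ in Ioo (0:ℝ) Real.pi,
              Real.exp (-lam * Real.sqrt (s ^ 2 + r ^ 2 - 2 * s * r * Real.cos θ)) *
                (s ^ 2 + r ^ 2 - 2 * s * r * Real.cos θ) ^ (-(α + 2) / 2) := by
  have hr0 : 0 < r := hr.1
  set e : EuclideanSpace ℝ (Fin 2) ≃ₗᵢ[ℝ] ℂ := Complex.orthonormalBasisOneI.repr.symm
  have hex : e x₀ = r := by simp [e, Complex.orthonormalBasisOneI_repr_symm_apply, hx₀]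
  set Φ : ℂ → ℝ := fun z => (v ‖(r : ℂ) + z‖ - v ‖(r : ℂ)‖) * temperedKernel α lam ‖z‖
  have hΦ : Integrable Φ :=
    integrable_radial_sub_mul_temperedKernel volume Complex.finrank_real_complex hα.2 hlam hv hv1 _
  have hintegrand : (fun y : EuclideanSpace ℝ (Fin 2) =>
      (u (x₀ + y) - u x₀) * Real.exp (-lam * ‖y‖) * ‖y‖ ^ (-(α + 2))) = Φ ∘ e := by
    funext y
    simp only [Φ, Function.comp, hu, ← hex, ← map_add, LinearIsometryEquiv.norm_map,
      temperedKernel, mul_assoc]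
  have hΦ_sub : (fun z => Φ (z - r)) =
      fun z : ℂ => (v ‖z‖ - v r) * temperedKernel α lam ‖z - r‖ := by
    funext z
    simp only [Φ, add_sub_cancel, Complex.norm_real, Real.norm_of_nonneg hr0.le]
  rw [IntegrableOn, restrict_compl_singleton, hintegrand]
  refine ⟨e.measurePreserving.integrable_comp_of_integrable hΦ, ?_⟩
  rw [Function.comp_def, e.measurePreserving.integral_comp e.toHomeomorph.measurableEmbedding,
    ← integral_sub_right_eq_self Φ (r : ℂ), hΦ_sub,
    Complex.integral_eq_integral_Ioi_integral_Ioo (hΦ_sub ▸ hΦ.comp_sub_right _),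
    ← integral_const_mul]
  refine setIntegral_congr_fun measurableSet_Ioi fun s (hs : 0 < s) => ?_
  simp only [Complex.norm_polarCoord_symm, abs_of_pos hs, integral_const_mul,
    integral_temperedKernel_norm_polarCoord_symm_sub, smul_eq_mul]
  ring
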